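/- arXiv:2410.22665 — 2 statements merged into one kernel-verified Lean document; each statement's English description precedes it below -/
import Mathlib

section
/- Let A be a p×q complex matrix and B a q×r complex matrix such that the kernel of A is contained in the image of B. If a(z) is a q-vector of polynomial functions with A·a(z) = 0 for all z, then there exists an r-vector b(z) of polynomial functions with B·b(z) = a(z) for all z, and moreover b(z) = 0 whenever a(z) = 0. -/
/-! Choose a constant matrix `M` inverting `B` on `ker A` (a linear section of `B` over
`ker A ⊆ im B`) and put `b = M a`: it is polynomial because `M` is constant,
`B (M a(z)) = a(z)` since `a(z) ∈ ker A`, and `b(z) = M a(z)` vanishes with `a(z)` by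
linearity. -/

open MvPolynomial

open scoped Matrix

theorem LinearMap.exists_rightInverse_on_of_le_range {K V W : Type*} [DivisionRing K]
    [AddCommGroup V] [Module K V] [AddCommGroup W] [Module K W] (f : V →ₗ[K] W)
    {S : Submodule K W} (hS : S ≤ range f) : ∃ g : W →ₗ[K] V, ∀ w ∈ S, f (g w) = w := by
  obtain ⟨h, hh⟩ := Module.projective_lifting_property f.rangeRestrict (Submodule.inclusion hS)
    f.surjective_rangeRestrict
  obtain ⟨g, hg⟩ := h.exists_extend
  refine ⟨g, fun w hw => ?_⟩
  have hgw : g w = h ⟨w, hw⟩ := by rw [← hg]; rfl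
  rw [hgw]
  exact congr(Subtype.val $(LinearMap.congr_fun hh ⟨w, hw⟩))

theorem Matrix.exists_mulVec_rightInverse_on_ker {K m n l : Type*} [Field K] [Fintype n]
    [Fintype l] [DecidableEq n] (A : Matrix m n K) (B : Matrix n l K)
    (hker : ∀ v, A *ᵥ v = 0 → ∃ w, B *ᵥ w = v) :
    ∃ M : Matrix l n K, ∀ v, A *ᵥ v = 0 → B *ᵥ (M *ᵥ v) = v := by
  obtain ⟨g, hg⟩ := B.mulVecLin.exists_rightInverse_on_of_le_range
    (S := LinearMap.ker A.mulVecLin) fun v hv => hker v hv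
  refine ⟨LinearMap.toMatrix' g, fun v hv => ?_⟩
  rw [LinearMap.toMatrix'_mulVec]
  exact hg v hv

theorem MvPolynomial.eval_mulVec_map_C {R σ m n : Type*} [CommSemiring R] [Fintype n]
    (M : Matrix m n R) (a : n → MvPolynomial σ R) (z : σ → R) :
    (fun j => eval z ((M.map C *ᵥ a) j)) = M *ᵥ fun i => eval z (a i) := by
  ext j
  simp [Matrix.mulVec, dotProduct, map_sum]

/-- **Parametrized solutions of linear systems, vanishing version.**
As in the basic parametrized-solution lemma, with the additional conclusion that the
polynomial solution `b(z)` can be chosen to vanish at every point `z` where `a(z)`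
vanishes. -/
theorem parametrized_solution_vanishing
    (p q r k : ℕ) (A : Matrix (Fin p) (Fin q) ℂ) (B : Matrix (Fin q) (Fin r) ℂ)
    (hker : ∀ v : Fin q → ℂ, A.mulVec v = 0 → ∃ w : Fin r → ℂ, B.mulVec w = v)
    (a : Fin q → MvPolynomial (Fin k) ℂ)
    (ha : ∀ z : Fin k → ℂ, A.mulVec (fun i => eval z (a i)) = 0) :
    ∃ b : Fin r → MvPolynomial (Fin k) ℂ,
      (∀ z : Fin k → ℂ, B.mulVec (fun j => eval z (b j)) = fun i => eval z (a i)) ∧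
      (∀ z : Fin k → ℂ, (∀ i, eval z (a i) = 0) → ∀ j, eval z (b j) = 0) := by
  obtain ⟨M, hM⟩ := A.exists_mulVec_rightInverse_on_ker B hker
  refine ⟨M.map C *ᵥ a, fun z => ?_, fun z hz j => ?_⟩
  · rw [eval_mulVec_map_C]
    exact hM _ (ha z)
  · have hz : (fun i => eval z (a i)) = 0 := funext hz
    simpa [hz] using congr_fun (eval_mulVec_map_C M a z) j
end

section
/- Let Δ be the full (s-1)-simplex and Y_1,...,Y_s coordinate subspaces of ℂ^d, with Y = ⋃ Y_i and Y_τ = ⋂_{i ∈ τ} Y_i for τ ⊆ {1,...,s}. If (g_1,...,g_s) with g_i a polynomial function on Y_i satisfies g_i|_{Y_{ij}} = g_j|_{Y_{ij}} for all i,j, then there is a unique polynomial function g on Y with g|_{Y_i} = g_i for all i. (Degree-0 exactness of the algebraic Čech complex.) -/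
open MvPolynomial

def coordSubspace {d : ℕ} (S : Finset (Fin d)) : Set (Fin d → ℂ) :=
  {z | ∀ i ∈ S, z i = 0}

/-- Substitute `0` for the variables in `T`. -/
noncomputable def zeroOut {d : ℕ} (T : Finset (Fin d)) :
    MvPolynomial (Fin d) ℂ →ₐ[ℂ] MvPolynomial (Fin d) ℂ :=
  bind₁ (fun j => if j ∈ T then 0 else X j)

lemma eval_zeroOut {d : ℕ} (T : Finset (Fin d)) (p : MvPolynomial (Fin d) ℂ)
    (z : Fin d → ℂ) :
    eval z (zeroOut T p) = eval (fun j => if j ∈ T then 0 else z j) p := by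
  simp only [zeroOut, eval, eval₂Hom_bind₁]
  refine eval₂Hom_congr rfl (funext fun j => ?_) rfl
  split_ifs <;> simp

lemma zeroOut_mem {d : ℕ} (T : Finset (Fin d)) (z : Fin d → ℂ) :
    (fun j => if j ∈ T then 0 else z j) ∈ coordSubspace T := by
  intro i hi
  simp [hi]

lemma zeroOut_mem' {d : ℕ} (T U : Finset (Fin d)) (z : Fin d → ℂ)
    (hz : z ∈ coordSubspace U) :
    (fun j => if j ∈ T then 0 else z j) ∈ coordSubspace U := by
  intro i hi
  simp only
  split_ifs with h
  · rfl
  · exact hz i hi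

lemma eval_zeroOut_of_mem {d : ℕ} (T : Finset (Fin d)) (p : MvPolynomial (Fin d) ℂ)
    (z : Fin d → ℂ) (hz : z ∈ coordSubspace T) :
    eval z (zeroOut T p) = eval z p := by
  rw [eval_zeroOut, show (eval fun j => if j ∈ T then 0 else z j) = eval z from
    congrArg _ (funext fun j => by split_ifs with h; exacts [(hz j h).symm, rfl])]

lemma cech_exists (d : ℕ) : ∀ (s : ℕ) (S : Fin s → Finset (Fin d))
    (g : Fin s → MvPolynomial (Fin d) ℂ),
    (∀ i j, ∀ z ∈ coordSubspace (S i) ∩ coordSubspace (S j),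
      eval z (g i) = eval z (g j)) →
    ∃ G : MvPolynomial (Fin d) ℂ,
      ∀ i, ∀ z ∈ coordSubspace (S i), eval z G = eval z (g i) := by
  intro s
  induction s with
  | zero => exact fun S g _ => ⟨0, fun i => i.elim0⟩
  | succ n ih =>
    intro S g hcompat
    obtain ⟨G, hG⟩ := ih (fun i => S i.castSucc) (fun i => g i.castSucc)
      (fun i j z hz => hcompat i.castSucc j.castSucc z hz)
    set t : Fin (n+1) := Fin.last n
    refine ⟨G + zeroOut (S t) (g t - G), ?_⟩
    intro i
    refine Fin.lastCases ?_ ?_ i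
    · -- i = last
      intro z hz
      rw [map_add, eval_zeroOut_of_mem _ _ _ hz, map_sub]
      ring
    · -- i = castSucc
      intro i' z hz
      rw [map_add]
      have hm := zeroOut_mem (S t) z
      have hm' := zeroOut_mem' (S t) (S i'.castSucc) z hz
      rw [eval_zeroOut, map_sub, hcompat t i'.castSucc _ ⟨hm, hm'⟩,
        hG i' _ hm']
      simp [hG i' z hz]

/-- **Degree-`0` exactness of the algebraic Čech complex for coordinate subspaces.**
Let `Y_1, …, Y_s` be coordinate subspaces of `ℂ^d` (each `Y_i` the zero set of the
coordinates in a finset `S i`), and `Y = ⋃ Y_i`.  If polynomial functions `g_i` on `Y_i`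
(restrictions of polynomials `g i`) satisfy `g_i = g_j` on every `Y_i ∩ Y_j`, then there
is a polynomial function `g` on `Y` restricting to `g_i` on each `Y_i`, and such a `g` is
unique as a function on `Y`. -/
theorem algebraic_cech_degree_zero_exact
    (d s : ℕ) (S : Fin s → Finset (Fin d)) (g : Fin s → MvPolynomial (Fin d) ℂ)
    (hcompat : ∀ i j, ∀ z ∈ coordSubspace (S i) ∩ coordSubspace (S j),
      eval z (g i) = eval z (g j)) :
    ∃ G : MvPolynomial (Fin d) ℂ,
      (∀ i, ∀ z ∈ coordSubspace (S i), eval z G = eval z (g i)) ∧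
      ∀ G' : MvPolynomial (Fin d) ℂ,
        (∀ i, ∀ z ∈ coordSubspace (S i), eval z G' = eval z (g i)) →
        ∀ z ∈ ⋃ i, coordSubspace (S i), eval z G' = eval z G := by
  obtain ⟨G, hG⟩ := cech_exists d s S g hcompat
  refine ⟨G, hG, ?_⟩
  intro G' hG' z hz
  obtain ⟨_, ⟨i, rfl⟩, hi⟩ := hz
  rw [hG' i z hi, hG i z hi]
end
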